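/- arXiv:1803.00877 — 3 statements merged into one kernel-verified Lean document; each statement's English description precedes it below -/
import Mathlib

section
/- For every β > 0 and every m ∈ ℝ, ∫_0^∞ e^{-m² x²} / (x² + β²) dx = (π/(2β)) e^{β² m²} ( 1 - (2/√π) ∫_0^{|βm|} e^{-w²} dw ). -/
open MeasureTheory Real Set Filter Topology

section Aux

variable {β : ℝ}

private lemma base_hasDeriv (hβ : 0 < β) (x : ℝ) :
    HasDerivAt (fun y => β⁻¹ * Real.arctan (β⁻¹ * y)) ((x ^ 2 + β ^ 2)⁻¹) x := by
  have h := ((Real.hasDerivAt_arctan (β⁻¹ * x)).comp x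
    ((hasDerivAt_id x).const_mul β⁻¹)).const_mul β⁻¹
  refine h.congr_deriv ?_
  have hb : (β:ℝ) ≠ 0 := hβ.ne'
  field_simp
  ring

private lemma base_integrable (hβ : 0 < β) :
    IntegrableOn (fun x : ℝ => (x ^ 2 + β ^ 2)⁻¹) (Set.Ioi (0:ℝ)) := by
  refine integrableOn_Ioi_deriv_of_nonneg' (g := fun y => β⁻¹ * Real.arctan (β⁻¹ * y)) (a := 0) (l := β⁻¹ * (π / 2))
    (fun x _ => base_hasDeriv hβ x) (fun x _ => by positivity) ?_
  have h1 : Tendsto (fun x : ℝ => β⁻¹ * x) atTop atTop :=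
    Tendsto.const_mul_atTop (by positivity) tendsto_id
  exact Tendsto.const_mul _ ((Real.tendsto_arctan_atTop.mono_right nhdsWithin_le_nhds).comp h1)

private lemma base_integral (hβ : 0 < β) :
    ∫ x in Set.Ioi (0:ℝ), (x ^ 2 + β ^ 2)⁻¹ = π / (2 * β) := by
  have h := integral_Ioi_of_hasDerivAt_of_nonneg' (g := fun y => β⁻¹ * Real.arctan (β⁻¹ * y))
    (g' := fun x => (x ^ 2 + β ^ 2)⁻¹) (a := 0) (l := β⁻¹ * (π / 2))
    (fun x _ => base_hasDeriv hβ x) (fun x _ => by positivity) ?_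
  · rw [h]
    simp [Real.arctan_zero]
    ring
  · have h1 : Tendsto (fun x : ℝ => β⁻¹ * x) atTop atTop :=
      Tendsto.const_mul_atTop (by positivity) tendsto_id
    exact Tendsto.const_mul _ ((Real.tendsto_arctan_atTop.mono_right nhdsWithin_le_nhds).comp h1)

private lemma f_cont (t : ℝ) (hβ : 0 < β) :
    Continuous (fun x : ℝ => Real.exp (-(t * (x ^ 2 + β ^ 2))) / (x ^ 2 + β ^ 2)) := by
  refine Continuous.div (by continuity) (by continuity) fun x => ?_
  positivity

private lemma f_le (hβ : 0 < β) {t : ℝ} (ht : 0 ≤ t) (x : ℝ) :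
    ‖Real.exp (-(t * (x ^ 2 + β ^ 2))) / (x ^ 2 + β ^ 2)‖ ≤ (x ^ 2 + β ^ 2)⁻¹ := by
  have hA : (0:ℝ) < x ^ 2 + β ^ 2 := by positivity
  rw [Real.norm_eq_abs, abs_of_nonneg (by positivity)]
  rw [div_le_iff₀ hA, inv_mul_cancel₀ hA.ne']
  exact Real.exp_le_one_iff.2 (by nlinarith)

private lemma f_integrable (hβ : 0 < β) {t : ℝ} (ht : 0 ≤ t) :
    IntegrableOn (fun x : ℝ => Real.exp (-(t * (x ^ 2 + β ^ 2))) / (x ^ 2 + β ^ 2))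
      (Set.Ioi (0:ℝ)) :=
  (base_integrable hβ).mono' ((f_cont t hβ).aestronglyMeasurable)
    (ae_of_all _ fun x => f_le hβ ht x)

private lemma g_deriv (hβ : 0 < β) {μ : ℝ} (hμ : 0 < μ) :
    HasDerivAt (fun ν : ℝ => ∫ x in Set.Ioi (0:ℝ),
        Real.exp (-(ν ^ 2 * (x ^ 2 + β ^ 2))) / (x ^ 2 + β ^ 2))
      (-Real.sqrt π * Real.exp (-(β ^ 2 * μ ^ 2))) μ := by
  have key := hasDerivAt_integral_of_dominated_loc_of_deriv_le (μ := volume.restrict (Set.Ioi 0))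
    (F := fun ν x => Real.exp (-(ν ^ 2 * (x ^ 2 + β ^ 2))) / (x ^ 2 + β ^ 2))
    (F' := fun ν x => -2 * ν * Real.exp (-(ν ^ 2 * (x ^ 2 + β ^ 2))))
    (x₀ := μ) (s := Metric.ball μ (μ / 2))
    (bound := fun x => 3 * μ * Real.exp (-(μ / 2) ^ 2 * x ^ 2))
    (Metric.ball_mem_nhds μ (by positivity))
    (Eventually.of_forall fun ν => ((f_cont (ν ^ 2) hβ).aestronglyMeasurable))
    (f_integrable hβ (by positivity))
    (by
      refine Continuous.aestronglyMeasurable ?_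
      continuity)
    ?_ ?_ ?_
  · have hval : (∫ x in Set.Ioi (0:ℝ), -2 * μ * Real.exp (-(μ ^ 2 * (x ^ 2 + β ^ 2))))
        = -Real.sqrt π * Real.exp (-(β ^ 2 * μ ^ 2)) := by
      have h1 : ∀ x : ℝ, -2 * μ * Real.exp (-(μ ^ 2 * (x ^ 2 + β ^ 2)))
          = (-2 * μ * Real.exp (-(β ^ 2 * μ ^ 2))) * Real.exp (-(μ ^ 2) * x ^ 2) := by
        intro x
        have hsplit : Real.exp (-(μ ^ 2 * (x ^ 2 + β ^ 2)))
            = Real.exp (-(β ^ 2 * μ ^ 2)) * Real.exp (-(μ ^ 2) * x ^ 2) := by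
          rw [← Real.exp_add]
          congr 1
          ring
        rw [hsplit]
        ring
      simp_rw [h1]
      rw [MeasureTheory.integral_const_mul, integral_gaussian_Ioi]
      have h2 : Real.sqrt (π / μ ^ 2) = Real.sqrt π / μ := by
        rw [Real.sqrt_div pi_pos.le, Real.sqrt_sq hμ.le]
      rw [h2]
      field_simp
    rw [← hval]
    exact key.2
  · -- bound
    refine ae_of_all _ fun x ν hν => ?_
    rw [Real.ball_eq_Ioo] at hν
    obtain ⟨hν1, hν2⟩ := hν
    have hν0 : 0 < ν := by linarith
    have hsq : (μ / 2) ^ 2 ≤ ν ^ 2 := by nlinarith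
    rw [Real.norm_eq_abs, abs_mul, abs_of_nonneg (Real.exp_nonneg _)]
    have h1 : |(-2 : ℝ) * ν| ≤ 3 * μ := by
      rw [abs_of_nonpos (by nlinarith)]
      linarith
    refine mul_le_mul h1 (Real.exp_le_exp.2 ?_) (Real.exp_nonneg _) (by positivity)
    nlinarith [sq_nonneg x, sq_nonneg β, mul_nonneg (sub_nonneg.2 hsq) (sq_nonneg x),
      mul_nonneg (sq_nonneg ν) (sq_nonneg β)]
  · -- bound integrable
    exact ((integrable_exp_neg_mul_sq (show (0:ℝ) < (μ/2)^2 by positivity)).integrableOn).const_mul _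
  · -- differentiability
    refine ae_of_all _ fun x ν _ => ?_
    have hA : (0:ℝ) < x ^ 2 + β ^ 2 := by positivity
    have h1 : HasDerivAt (fun ν : ℝ => -(ν ^ 2 * (x ^ 2 + β ^ 2)))
        (-(2 * ν * (x ^ 2 + β ^ 2))) ν := by
      have := ((hasDerivAt_pow 2 ν).mul_const (x ^ 2 + β ^ 2)).neg
      refine this.congr_deriv ?_
      ring
    have h2 := (h1.exp).div_const (x ^ 2 + β ^ 2)
    refine h2.congr_deriv ?_
    field_simp

private lemma prim_deriv (hβ : 0 < β) (ν : ℝ) :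
    HasDerivAt (fun u : ℝ => ∫ s in (0:ℝ)..u, Real.exp (-(β ^ 2 * s ^ 2)))
      (Real.exp (-(β ^ 2 * ν ^ 2))) ν := by
  have hc : Continuous (fun s : ℝ => Real.exp (-(β ^ 2 * s ^ 2))) := by continuity
  exact intervalIntegral.integral_hasDerivAt_right (hc.intervalIntegrable _ _)
    (hc.stronglyMeasurableAtFilter _ _) hc.continuousAt

private lemma key_identity (hβ : 0 < β) {μ : ℝ} (hμ : 0 ≤ μ) :
    (∫ x in Set.Ioi (0:ℝ), Real.exp (-(μ ^ 2 * (x ^ 2 + β ^ 2))) / (x ^ 2 + β ^ 2))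
      = π / (2 * β) - Real.sqrt π * ∫ s in (0:ℝ)..μ, Real.exp (-(β ^ 2 * s ^ 2)) := by
  have hder : ∀ ν : ℝ, 0 < ν → HasDerivAt (fun ν : ℝ =>
      (∫ x in Set.Ioi (0:ℝ), Real.exp (-(ν ^ 2 * (x ^ 2 + β ^ 2))) / (x ^ 2 + β ^ 2))
        + Real.sqrt π * ∫ s in (0:ℝ)..ν, Real.exp (-(β ^ 2 * s ^ 2))) 0 ν := by
    intro ν hν
    have := (g_deriv hβ hν).add ((prim_deriv hβ ν).const_mul (Real.sqrt π))
    refine this.congr_deriv ?_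
    ring
  have hconst : ∀ a b : ℝ, 0 < a → a ≤ b →
      ((∫ x in Set.Ioi (0:ℝ), Real.exp (-(b ^ 2 * (x ^ 2 + β ^ 2))) / (x ^ 2 + β ^ 2))
        + Real.sqrt π * ∫ s in (0:ℝ)..b, Real.exp (-(β ^ 2 * s ^ 2)))
      = (∫ x in Set.Ioi (0:ℝ), Real.exp (-(a ^ 2 * (x ^ 2 + β ^ 2))) / (x ^ 2 + β ^ 2))
        + Real.sqrt π * ∫ s in (0:ℝ)..a, Real.exp (-(β ^ 2 * s ^ 2)) := by
    intro a b ha hab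
    exact constant_of_has_deriv_right_zero
      (fun x hx => ((hder x (lt_of_lt_of_le ha hx.1)).continuousAt).continuousWithinAt)
      (fun x hx => (hder x (lt_of_lt_of_le ha hx.1)).hasDerivWithinAt)
      b ⟨hab, le_refl b⟩
  have hg0 : (∫ x in Set.Ioi (0:ℝ),
      Real.exp (-((0:ℝ) ^ 2 * (x ^ 2 + β ^ 2))) / (x ^ 2 + β ^ 2)) = π / (2 * β) := by
    have : ∀ x : ℝ, Real.exp (-((0:ℝ) ^ 2 * (x ^ 2 + β ^ 2))) / (x ^ 2 + β ^ 2)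
        = (x ^ 2 + β ^ 2)⁻¹ := by
      intro x
      norm_num
    simp_rw [this]
    exact base_integral hβ
  rcases eq_or_lt_of_le hμ with rfl | hμ'
  · simp only [intervalIntegral.integral_same, mul_zero, sub_zero]
    exact hg0
  have htend_g : Tendsto (fun ν : ℝ => ∫ x in Set.Ioi (0:ℝ),
      Real.exp (-(ν ^ 2 * (x ^ 2 + β ^ 2))) / (x ^ 2 + β ^ 2))
      (𝓝[>] (0:ℝ)) (𝓝 (π / (2 * β))) := by
    rw [← base_integral hβ]
    refine tendsto_integral_filter_of_dominated_convergence
      (fun x => (x ^ 2 + β ^ 2)⁻¹)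
      (Eventually.of_forall fun ν => (f_cont (ν ^ 2) hβ).aestronglyMeasurable) ?_
      (base_integrable hβ) ?_
    · filter_upwards [self_mem_nhdsWithin] with ν (hν : 0 < ν)
      exact ae_of_all _ fun x => f_le hβ (by positivity) x
    · refine ae_of_all _ fun x => ?_
      have hA : (0:ℝ) < x ^ 2 + β ^ 2 := by positivity
      have hc : ContinuousAt (fun ν : ℝ =>
          Real.exp (-(ν ^ 2 * (x ^ 2 + β ^ 2))) / (x ^ 2 + β ^ 2)) 0 := by
        apply ContinuousAt.div_const
        exact (Real.continuous_exp.comp (by continuity)).continuousAt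
      have h0 := hc.tendsto.mono_left (nhdsWithin_le_nhds (s := Set.Ioi (0:ℝ)))
      simpa [Real.exp_zero] using h0
  have htend_prim : Tendsto (fun ν : ℝ => ∫ s in (0:ℝ)..ν, Real.exp (-(β ^ 2 * s ^ 2)))
      (𝓝[>] (0:ℝ)) (𝓝 0) := by
    have h0 := (prim_deriv hβ 0).continuousAt.tendsto.mono_left
      (nhdsWithin_le_nhds (s := Set.Ioi (0:ℝ)))
    simpa using h0
  have htend_h : Tendsto (fun ν : ℝ =>
      (∫ x in Set.Ioi (0:ℝ), Real.exp (-(ν ^ 2 * (x ^ 2 + β ^ 2))) / (x ^ 2 + β ^ 2))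
        + Real.sqrt π * ∫ s in (0:ℝ)..ν, Real.exp (-(β ^ 2 * s ^ 2)))
      (𝓝[>] (0:ℝ)) (𝓝 (π / (2 * β))) := by
    have := htend_g.add (htend_prim.const_mul (Real.sqrt π))
    simpa using this
  have heventually : (fun ν : ℝ =>
      (∫ x in Set.Ioi (0:ℝ), Real.exp (-(ν ^ 2 * (x ^ 2 + β ^ 2))) / (x ^ 2 + β ^ 2))
        + Real.sqrt π * ∫ s in (0:ℝ)..ν, Real.exp (-(β ^ 2 * s ^ 2)))
      =ᶠ[𝓝[>] (0:ℝ)] fun _ =>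
      (∫ x in Set.Ioi (0:ℝ), Real.exp (-(μ ^ 2 * (x ^ 2 + β ^ 2))) / (x ^ 2 + β ^ 2))
        + Real.sqrt π * ∫ s in (0:ℝ)..μ, Real.exp (-(β ^ 2 * s ^ 2)) := by
    filter_upwards [Ioo_mem_nhdsGT_of_mem ⟨le_refl (0:ℝ), hμ'⟩] with a ha
    exact (hconst a μ ha.1 ha.2.le).symm
  have hfinal := tendsto_nhds_unique tendsto_const_nhds (htend_h.congr' heventually)
  linarith [hfinal]

end Aux

/-- Formula 3.466.1 of Gradshteyn–Ryzhik: for `β > 0` and `m ∈ ℝ`,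
`∫_0^∞ e^{-m²x²}/(x²+β²) dx = (π/(2β)) e^{β²m²} (1 - (2/√π) ∫_0^{|βm|} e^{-w²} dw)`. -/
theorem integral_exp_sq_div_add_sq (β m : ℝ) (hβ : 0 < β) :
    ∫ x in Set.Ioi (0:ℝ), Real.exp (-m ^ 2 * x ^ 2) / (x ^ 2 + β ^ 2)
      = π / (2 * β) * Real.exp (β ^ 2 * m ^ 2)
          * (1 - 2 / Real.sqrt π * ∫ w in (0:ℝ)..|β * m|, Real.exp (-w ^ 2)) := by
  have h1 : ∀ x : ℝ, Real.exp (-m ^ 2 * x ^ 2) / (x ^ 2 + β ^ 2)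
      = Real.exp (β ^ 2 * m ^ 2)
        * (Real.exp (-(|m| ^ 2 * (x ^ 2 + β ^ 2))) / (x ^ 2 + β ^ 2)) := by
    intro x
    rw [← mul_div_assoc, ← Real.exp_add, sq_abs]
    congr 2
    ring
  simp_rw [h1]
  rw [MeasureTheory.integral_const_mul, key_identity hβ (abs_nonneg m)]
  -- substitution in the interval integral
  have hsub : (∫ w in (0:ℝ)..|β * m|, Real.exp (-w ^ 2))
      = β * ∫ s in (0:ℝ)..|m|, Real.exp (-(β ^ 2 * s ^ 2)) := by
    have := intervalIntegral.smul_integral_comp_mul_left (a := (0:ℝ)) (b := |m|)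
      (fun w => Real.exp (-w ^ 2)) β
    simp only [smul_eq_mul, mul_zero] at this
    rw [abs_mul, abs_of_pos hβ, ← this]
    congr 1
    refine intervalIntegral.integral_congr fun s _ => ?_
    congr 1
    ring
  rw [hsub]
  have hπ : Real.sqrt π * Real.sqrt π = π := Real.mul_self_sqrt pi_pos.le
  have hπ0 : Real.sqrt π ≠ 0 := by positivity
  field_simp
  linear_combination (-2 * β
    * (∫ s in (0:ℝ)..|m|, Real.exp (-(β ^ 2 * s ^ 2)))) * hπ
end

section
/- For every μ ∈ ℝ and all 0 < a < t < b < ∞, the conditional density of ^μT_{0,t} given ^μT_{t,0} = b, i.e. the ratio of the joint density e^{-μ²b/2}/(2π√(a(b-a)³)) of (^μT_{0,t}, ^μT_{t,0}) to the marginal density (e^{-μ²b/2}/(πb))√(t/(b-t)) of ^μT_{t,0}, equals (1/2) (b/√(at)) √((b-t)/(b-a)³); in particular it does not depend on the drift μ, and as b → ∞ it converges pointwise to 1/(2√(at)) for 0 < a < t. -/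
open Real Filter Topology

/-! The common factor `e^{-μ²b/2}` of the two densities cancels in their ratio, which is then
an algebraic function of `a, t, b` alone. As `b → ∞`, `b √((b-t)/(b-a)³) = √((1-t/b)/(1-a/b)³)`
tends to `1`. -/

theorem density_ratio_eq {c a t b : ℝ} (hc : c ≠ 0) (ha : 0 < a) (ht : 0 < t) (htb : t < b) :
    c / (2 * π * √(a * (b - a) ^ 3)) / (c / (π * b) * √(t / (b - t)))
      = 1 / 2 * (b / √(a * t)) * √((b - t) / (b - a) ^ 3) := by
  have hbt : 0 < b - t := sub_pos.2 htb
  rw [sqrt_mul ha.le, sqrt_mul ha.le, sqrt_div ht.le, sqrt_div hbt.le]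
  field_simp

theorem tendsto_mul_sqrt_div_pow_three_atTop (a t : ℝ) :
    Tendsto (fun b : ℝ => b * √((b - t) / (b - a) ^ 3)) atTop (𝓝 1) := by
  have one_sub_div (x : ℝ) : Tendsto (fun b : ℝ => 1 - x / b) atTop (𝓝 1) := by
    simpa using (tendsto_const_nhds (x := (1 : ℝ))).sub (tendsto_const_nhds.div_atTop tendsto_id)
  have hlim : Tendsto (fun b : ℝ => √((1 - t / b) / (1 - a / b) ^ 3)) atTop (𝓝 1) := by
    simpa using ((one_sub_div t).div ((one_sub_div a).pow 3) (by norm_num)).sqrt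
  refine hlim.congr' ?_
  filter_upwards [eventually_gt_atTop (max a 0)] with b hb
  have hb0 : 0 < b := (le_max_right a 0).trans_lt hb
  have hba : b - a ≠ 0 := sub_ne_zero.2 ((le_max_left a 0).trans_lt hb).ne'
  rw [← sqrt_sq hb0.le, ← sqrt_mul (sq_nonneg b), sqrt_sq hb0.le]
  congr 1
  field_simp

/-- The conditional density of `^μT_{0,t}` given `^μT_{t,0} = b`, i.e. the
ratio of the joint density `e^{-μ²b/2}/(2π√(a(b-a)³))` to the marginal density
`(e^{-μ²b/2}/(πb))√(t/(b-t))`, equals `(1/2)(b/√(at))√((b-t)/(b-a)³)`; in particular it does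
not depend on the drift `μ`, and as `b → ∞` it converges pointwise to `1/(2√(at))`. -/
theorem conditional_density_lastZero_given_firstZero (μ a t b : ℝ)
    (ha : 0 < a) (hat : a < t) (htb : t < b) :
    (Real.exp (-μ ^ 2 * b / 2) / (2 * π * Real.sqrt (a * (b - a) ^ 3)))
        / (Real.exp (-μ ^ 2 * b / 2) / (π * b) * Real.sqrt (t / (b - t)))
      = 1 / 2 * (b / Real.sqrt (a * t)) * Real.sqrt ((b - t) / (b - a) ^ 3) ∧
    (∀ μ' : ℝ,
      (Real.exp (-μ' ^ 2 * b / 2) / (2 * π * Real.sqrt (a * (b - a) ^ 3)))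
          / (Real.exp (-μ' ^ 2 * b / 2) / (π * b) * Real.sqrt (t / (b - t)))
        = (Real.exp (-μ ^ 2 * b / 2) / (2 * π * Real.sqrt (a * (b - a) ^ 3)))
            / (Real.exp (-μ ^ 2 * b / 2) / (π * b) * Real.sqrt (t / (b - t)))) ∧
    Tendsto (fun b' : ℝ => 1 / 2 * (b' / Real.sqrt (a * t)) * Real.sqrt ((b' - t) / (b' - a) ^ 3))
      atTop (𝓝 (1 / (2 * Real.sqrt (a * t)))) := by
  have hratio (ν : ℝ) := density_ratio_eq (exp_ne_zero (-ν ^ 2 * b / 2)) ha (ha.trans hat) htb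
  refine ⟨hratio μ, fun μ' => (hratio μ').trans (hratio μ).symm, ?_⟩
  convert (tendsto_mul_sqrt_div_pow_three_atTop a t).const_mul (1 / (2 * √(a * t))) using 2
  · ring
  · rw [mul_one]
end

section
/- Let μ₁, μ₂ ∈ ℝ and let p(x,t) = ∫_0^∞ (e^{-(x-μ₁s)²/(2s)} / √(2πs)) · [ (e^{-(s-μ₂t)²/(2t)} + e^{-(s+μ₂t)²/(2t)}) / √(2πt) ] ds be the density of the iterated Brownian motion B_1^{μ₁}(|B_2^{μ₂}(t)|). Then for every λ > 0 and γ ∈ ℝ, its Fourier–Laplace transform equals ∫_{-∞}^{∞} e^{iγx} ∫_0^∞ e^{-λt} p(x,t) dt dx = (1/√(2λ+μ₂²)) [ 1/( γ²/2 - iγμ₁ + √(2λ+μ₂²) - μ₂ ) + 1/( γ²/2 - iγμ₁ + √(2λ+μ₂²) + μ₂ ) ]. -/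
open MeasureTheory Real

section aux
open Set

section Glasser
variable {α β : ℝ}

/-- derivative facts for g u = α u - β / u -/
lemma glasser_deriv (hβ : 0 < β) {u : ℝ} (hu : 0 < u) :
    HasDerivAt (fun u : ℝ => α * u - β / u) (α + β / u ^ 2) u := by
  have h1 : HasDerivAt (fun u : ℝ => α * u) α u := by
    simpa using (hasDerivAt_id u).const_mul α
  have h2 : HasDerivAt (fun u : ℝ => β / u) (-(β / u ^ 2)) u := by
    have := (hasDerivAt_inv hu.ne').const_mul β
    simpa [div_eq_mul_inv, mul_comm, neg_div] using this
  have h3 := h1.sub h2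
  rw [sub_neg_eq_add] at h3
  exact h3

lemma glasser_inj (hα : 0 < α) (hβ : 0 < β) :
    InjOn (fun u : ℝ => α * u - β / u) (Ioi 0) := by
  intro u hu v hv h
  simp only [mem_Ioi] at hu hv
  simp only at h
  have h' : (u - v) * (α * u * v + β) = 0 := by
    field_simp at h
    nlinarith [h]
  have h2 : α * u * v + β > 0 := by positivity
  have := mul_eq_zero.mp h'
  rcases this with h3 | h3
  · linarith
  · linarith

lemma glasser_surj (hα : 0 < α) (hβ : 0 < β) :
    (fun u : ℝ => α * u - β / u) '' (Ioi 0) = univ := by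
  apply eq_univ_of_forall
  intro y
  set D := Real.sqrt (y ^ 2 + 4 * α * β) with hD
  have hD2 : D ^ 2 = y ^ 2 + 4 * α * β := Real.sq_sqrt (by positivity)
  have hDy : -y < D := by
    nlinarith [Real.sqrt_nonneg (y ^ 2 + 4 * α * β), hD2]
  have hu : 0 < (y + D) / (2 * α) := by
    apply div_pos (by linarith) (by linarith)
  set u := (y + D) / (2 * α) with hu_def
  refine ⟨u, hu, ?_⟩
  simp only
  have hune : u ≠ 0 := hu.ne'
  have key : α * u ^ 2 - y * u - β = 0 := by
    rw [hu_def]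
    field_simp
    ring_nf
    nlinarith [hD2]
  field_simp
  nlinarith [key]
end Glasser

section Glasser2
variable {α β : ℝ}

lemma glasser_key (hα : 0 < α) (hβ : 0 < β) :
    (∫ u in Ioi (0:ℝ), (α + β / u ^ 2) * Real.exp (-(α * u - β / u) ^ 2)) = Real.sqrt π ∧
      IntegrableOn (fun u : ℝ => (α + β / u ^ 2) * Real.exp (-(α * u - β / u) ^ 2)) (Ioi 0) := by
  have hderiv : ∀ u ∈ Ioi (0:ℝ), HasDerivWithinAt (fun u : ℝ => α * u - β / u)
      (α + β / u ^ 2) (Ioi 0) u := fun u hu => (glasser_deriv hβ hu).hasDerivWithinAt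
  have hinj := glasser_inj hα hβ
  have himg := glasser_surj hα hβ
  have hG : Integrable (fun y : ℝ => Real.exp (-y ^ 2)) := by
    simpa using integrable_exp_neg_mul_sq (one_pos)
  constructor
  · have := integral_image_eq_integral_abs_deriv_smul measurableSet_Ioi hderiv hinj
      (fun y => Real.exp (-y ^ 2))
    rw [himg] at this
    rw [Measure.restrict_univ] at this
    have hg1 : (∫ y : ℝ, Real.exp (-y ^ 2)) = Real.sqrt π := by
      simpa using integral_gaussian 1
    rw [hg1] at this
    rw [this]
    apply setIntegral_congr_fun measurableSet_Ioi
    intro u hu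
    simp only [mem_Ioi] at hu
    have : |α + β / u ^ 2| = α + β / u ^ 2 := abs_of_pos (by positivity)
    simp [this, smul_eq_mul]
  · have := (integrableOn_image_iff_integrableOn_abs_deriv_smul measurableSet_Ioi hderiv hinj
      (fun y => Real.exp (-y ^ 2))).mp (by rw [himg]; exact hG.integrableOn)
    apply this.congr_fun ?_ measurableSet_Ioi
    intro u hu
    simp only [mem_Ioi] at hu
    have : |α + β / u ^ 2| = α + β / u ^ 2 := abs_of_pos (by positivity)
    simp [this, smul_eq_mul]

lemma glasser_int1 (hα : 0 < α) (hβ : 0 < β) :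
    IntegrableOn (fun u : ℝ => Real.exp (-(α * u - β / u) ^ 2)) (Ioi 0) := by
  refine Integrable.mono' ((glasser_key hα hβ).2.const_mul (1/α)) ?_ ?_
  · exact (Real.measurable_exp.comp
      (((((measurable_const.mul measurable_id).sub
        (measurable_const.div measurable_id)).pow_const 2)).neg)).aestronglyMeasurable
  · rw [ae_restrict_iff' measurableSet_Ioi]
    filter_upwards with u hu
    simp only [mem_Ioi] at hu
    rw [Real.norm_eq_abs, abs_of_nonneg (Real.exp_nonneg _)]
    have h1 : (1:ℝ) ≤ 1/α * (α + β / u ^ 2) := by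
      rw [one_div, inv_mul_eq_div, le_div_iff₀ hα]
      have : 0 < β / u ^ 2 := by positivity
      linarith
    calc Real.exp (-(α * u - β / u) ^ 2) = 1 * Real.exp (-(α * u - β / u) ^ 2) := (one_mul _).symm
      _ ≤ (1/α * (α + β / u ^ 2)) * Real.exp (-(α * u - β / u) ^ 2) :=
          mul_le_mul_of_nonneg_right h1 (Real.exp_nonneg _)
      _ = 1/α * ((α + β / u ^ 2) * Real.exp (-(α * u - β / u) ^ 2)) := by ring

lemma glasser_int2 (hα : 0 < α) (hβ : 0 < β) :
    IntegrableOn (fun u : ℝ => (β / α) / u ^ 2 * Real.exp (-(α * u - β / u) ^ 2)) (Ioi 0) := by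
  refine Integrable.mono' ((glasser_key hα hβ).2.const_mul (1/α)) ?_ ?_
  · exact ((measurable_const.div (measurable_id.pow_const 2)).mul (Real.measurable_exp.comp
      (((((measurable_const.mul measurable_id).sub
        (measurable_const.div measurable_id)).pow_const 2)).neg))).aestronglyMeasurable
  · rw [ae_restrict_iff' measurableSet_Ioi]
    filter_upwards with u hu
    simp only [mem_Ioi] at hu
    rw [Real.norm_eq_abs, abs_of_nonneg (by positivity)]
    have h1 : (β / α) / u ^ 2 ≤ 1/α * (α + β / u ^ 2) := by
      rw [div_div, one_div, inv_mul_eq_div, le_div_iff₀ hα, div_mul_eq_mul_div,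
        div_le_iff₀ (by positivity)]
      have hx : β / u ^ 2 * u ^ 2 = β := by field_simp
      nlinarith [hx, sq_nonneg (α*u)]
    calc (β / α) / u ^ 2 * Real.exp (-(α * u - β / u) ^ 2)
        ≤ (1/α * (α + β / u ^ 2)) * Real.exp (-(α * u - β / u) ^ 2) :=
          mul_le_mul_of_nonneg_right h1 (Real.exp_nonneg _)
      _ = 1/α * ((α + β / u ^ 2) * Real.exp (-(α * u - β / u) ^ 2)) := by ring

lemma glasser_invol (hα : 0 < α) (hβ : 0 < β) :
    (∫ u in Ioi (0:ℝ), Real.exp (-(α * u - β / u) ^ 2))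
      = ∫ u in Ioi (0:ℝ), (β / α) / u ^ 2 * Real.exp (-(α * u - β / u) ^ 2) := by
  set k := β / α with hk
  have hkpos : 0 < k := by positivity
  have hderiv : ∀ u ∈ Ioi (0:ℝ), HasDerivWithinAt (fun u : ℝ => k / u)
      (-(k / u ^ 2)) (Ioi 0) u := by
    intro u hu
    simp only [mem_Ioi] at hu
    have := (hasDerivAt_inv hu.ne').const_mul k
    exact (by simpa [div_eq_mul_inv, mul_comm, neg_div] using this :
      HasDerivAt (fun u : ℝ => k / u) (-(k / u ^ 2)) u).hasDerivWithinAt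
  have hinj : InjOn (fun u : ℝ => k / u) (Ioi 0) := by
    intro u hu v hv h
    simp only [mem_Ioi] at hu hv
    simp only at h
    field_simp at h
    linarith
  have himg : (fun u : ℝ => k / u) '' (Ioi 0) = Ioi 0 := by
    ext y
    constructor
    · rintro ⟨u, hu, rfl⟩
      simp only [mem_Ioi] at hu ⊢
      positivity
    · intro hy
      simp only [mem_Ioi] at hy
      exact ⟨k / y, by simp only [mem_Ioi]; positivity, by field_simp⟩
  have := integral_image_eq_integral_abs_deriv_smul measurableSet_Ioi hderiv hinj
    (fun y => Real.exp (-(α * y - β / y) ^ 2))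
  rw [himg] at this
  rw [this]
  apply setIntegral_congr_fun measurableSet_Ioi
  intro u hu
  simp only [mem_Ioi] at hu
  have habs : |-(k / u ^ 2)| = k / u ^ 2 := by
    rw [abs_neg]; exact abs_of_pos (by positivity)
  have harg : (α * (k / u) - β / (k / u)) ^ 2 = (α * u - β / u) ^ 2 := by
    have : α * (k / u) - β / (k / u) = -(α * u - β / u) := by
      rw [hk]; field_simp; ring
    rw [this, neg_sq]
  simp only [smul_eq_mul, habs, harg]

lemma glasser_gsq (hα : 0 < α) (hβ : 0 < β) :
    (∫ u in Ioi (0:ℝ), Real.exp (-(α * u - β / u) ^ 2)) = Real.sqrt π / (2 * α) := by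
  have h2 : (2:ℝ) * ∫ u in Ioi (0:ℝ), Real.exp (-(α * u - β / u) ^ 2) = Real.sqrt π / α := by
    have hsum : (2:ℝ) * ∫ u in Ioi (0:ℝ), Real.exp (-(α * u - β / u) ^ 2)
        = (∫ u in Ioi (0:ℝ), Real.exp (-(α * u - β / u) ^ 2))
          + ∫ u in Ioi (0:ℝ), (β / α) / u ^ 2 * Real.exp (-(α * u - β / u) ^ 2) := by
      rw [← glasser_invol hα hβ]; ring
    rw [hsum, ← integral_add (glasser_int1 hα hβ) (glasser_int2 hα hβ)]
    have : ∀ u ∈ Ioi (0:ℝ), Real.exp (-(α * u - β / u) ^ 2)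
        + (β / α) / u ^ 2 * Real.exp (-(α * u - β / u) ^ 2)
        = (1/α) * ((α + β / u ^ 2) * Real.exp (-(α * u - β / u) ^ 2)) := by
      intro u hu
      simp only [mem_Ioi] at hu
      field_simp
    rw [setIntegral_congr_fun measurableSet_Ioi this, MeasureTheory.integral_const_mul,
      (glasser_key hα hβ).1]
    field_simp
  have h3 : Real.sqrt π / (2 * α) = (Real.sqrt π / α) / 2 := by ring
  rw [h3]
  linarith

theorem glasser_value {a b : ℝ} (ha : 0 < a) (hb : 0 < b) :
    (∫ u in Ioi (0:ℝ), Real.exp (-(a * u ^ 2 + b / u ^ 2)))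
      = Real.sqrt π / (2 * Real.sqrt a) * Real.exp (-(2 * Real.sqrt (a * b))) := by
  set α := Real.sqrt a with hα'
  set β := Real.sqrt b with hβ'
  have hα : 0 < α := Real.sqrt_pos.mpr ha
  have hβ : 0 < β := Real.sqrt_pos.mpr hb
  have ha2 : α ^ 2 = a := Real.sq_sqrt ha.le
  have hb2 : β ^ 2 = b := Real.sq_sqrt hb.le
  have hab : Real.sqrt (a * b) = α * β := by
    rw [hα', hβ', Real.sqrt_mul ha.le]
  have hpt : ∀ u ∈ Ioi (0:ℝ), Real.exp (-(a * u ^ 2 + b / u ^ 2))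
      = Real.exp (-(α * u - β / u) ^ 2) * Real.exp (-(2 * (α * β))) := by
    intro u hu
    simp only [mem_Ioi] at hu
    rw [← Real.exp_add]
    congr 1
    have : a * u ^ 2 + b / u ^ 2 = (α * u - β / u) ^ 2 + 2 * (α * β) := by
      rw [← ha2, ← hb2]; field_simp; ring
    rw [this]; ring
  rw [setIntegral_congr_fun measurableSet_Ioi hpt, integral_mul_const, glasser_gsq hα hβ, hab]

theorem glasser_integrableOn {a b : ℝ} (ha : 0 < a) (hb : 0 < b) :
    IntegrableOn (fun u : ℝ => Real.exp (-(a * u ^ 2 + b / u ^ 2))) (Ioi 0) := by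
  set α := Real.sqrt a
  set β := Real.sqrt b
  have hα : 0 < α := Real.sqrt_pos.mpr ha
  have hβ : 0 < β := Real.sqrt_pos.mpr hb
  have ha2 : α ^ 2 = a := Real.sq_sqrt ha.le
  have hb2 : β ^ 2 = b := Real.sq_sqrt hb.le
  apply MeasureTheory.IntegrableOn.congr_fun ((glasser_int1 hα hβ).mul_const (Real.exp (-(2 * (α * β))))) ?_ measurableSet_Ioi
  intro u hu
  simp only [mem_Ioi] at hu
  dsimp only
  rw [← Real.exp_add]
  congr 1
  have : a * u ^ 2 + b / u ^ 2 = (α * u - β / u) ^ 2 + 2 * (α * β) := by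
    rw [← ha2, ← hb2]; field_simp; ring
  rw [this]; ring
end Glasser2

section Laplace
theorem sq_image_Ioi : (fun u : ℝ => u ^ 2) '' (Ioi 0) = Ioi 0 := by
  ext y
  constructor
  · rintro ⟨u, hu, rfl⟩
    simp only [mem_Ioi] at hu ⊢
    positivity
  · intro hy
    simp only [mem_Ioi] at hy
    exact ⟨Real.sqrt y, by simp only [mem_Ioi]; positivity, Real.sq_sqrt hy.le⟩

theorem laplace_subst {a b : ℝ} (ha : 0 < a) (hb : 0 < b) :
    (∫ t in Ioi (0:ℝ), Real.exp (-(a * t + b / t)) / Real.sqrt t)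
        = Real.sqrt (π / a) * Real.exp (-(2 * Real.sqrt (a * b)))
      ∧ IntegrableOn (fun t : ℝ => Real.exp (-(a * t + b / t)) / Real.sqrt t) (Ioi 0) := by
  have hderiv : ∀ u ∈ Ioi (0:ℝ), HasDerivWithinAt (fun u : ℝ => u ^ 2) (2 * u) (Ioi 0) u := by
    intro u hu
    simpa using (hasDerivAt_pow 2 u).hasDerivWithinAt
  have hinj : InjOn (fun u : ℝ => u ^ 2) (Ioi 0) := by
    intro u hu v hv h
    simp only [mem_Ioi] at hu hv
    simp only at h
    nlinarith
  have hpt : ∀ u ∈ Ioi (0:ℝ), |2 * u| • (Real.exp (-(a * u ^ 2 + b / u ^ 2)) / Real.sqrt (u ^ 2))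
      = 2 * Real.exp (-(a * u ^ 2 + b / u ^ 2)) := by
    intro u hu
    simp only [mem_Ioi] at hu
    rw [smul_eq_mul, Real.sqrt_sq hu.le, abs_of_pos (by positivity)]
    field_simp
  constructor
  · have := integral_image_eq_integral_abs_deriv_smul measurableSet_Ioi hderiv hinj
      (fun t => Real.exp (-(a * t + b / t)) / Real.sqrt t)
    rw [sq_image_Ioi] at this
    rw [this]
    rw [setIntegral_congr_fun measurableSet_Ioi hpt]
    rw [MeasureTheory.integral_const_mul, glasser_value ha hb, Real.sqrt_div Real.pi_nonneg]
    have hsa : (0:ℝ) < Real.sqrt a := Real.sqrt_pos.mpr ha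
    field_simp
  · have := (integrableOn_image_iff_integrableOn_abs_deriv_smul measurableSet_Ioi hderiv hinj
      (fun t => Real.exp (-(a * t + b / t)) / Real.sqrt t))
    rw [sq_image_Ioi] at this
    rw [this]
    exact MeasureTheory.IntegrableOn.congr_fun ((glasser_integrableOn ha hb).const_mul 2)
      (fun u hu => (hpt u hu).symm) measurableSet_Ioi
end Laplace

section CexpInt
open Complex in
theorem cexp_integrableOn {w : ℂ} (hw : w.re < 0) :
    IntegrableOn (fun s : ℝ => Complex.exp (w * s)) (Ioi 0) := by
  refine Integrable.mono' ((exp_neg_integrableOn_Ioi 0 (show (0:ℝ) < -w.re by linarith))) ?_ ?_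
  · apply Measurable.aestronglyMeasurable
    exact Complex.measurable_exp.comp (measurable_const.mul Complex.measurable_ofReal)
  · filter_upwards with s
    rw [Complex.norm_exp]
    simp [mul_comm, neg_mul]

open Complex in
theorem cexp_integral_Ioi {w : ℂ} (hw : w.re < 0) :
    ∫ s in Ioi (0:ℝ), Complex.exp (w * s) = -w⁻¹ := by
  have hw0 : w ≠ 0 := fun h => by simp [h] at hw
  have hderiv : ∀ s ∈ Ioi (0:ℝ), HasDerivAt (fun s : ℝ => w⁻¹ * Complex.exp (w * s))
      (Complex.exp (w * s)) s := by
    intro s _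
    have h1 : HasDerivAt (fun s : ℝ => w * (s:ℂ)) w s := by
      simpa using ((hasDerivAt_id (s:ℂ)).const_mul w).comp_ofReal
    have h2 := (Complex.hasDerivAt_exp (w * s)).comp s h1
    have h3 := h2.const_mul w⁻¹
    have h4 : w⁻¹ * Complex.exp (w * s) * w = Complex.exp (w * s) := by
      field_simp
    rw [← h4]
    simpa [Function.comp, mul_assoc] using h3
  have htend : Filter.Tendsto (fun s : ℝ => w⁻¹ * Complex.exp (w * s)) Filter.atTop (nhds 0) := by
    rw [tendsto_zero_iff_norm_tendsto_zero]
    have : (fun s : ℝ => ‖w⁻¹ * Complex.exp (w * s)‖) = fun s => ‖w⁻¹‖ * Real.exp (w.re * s) := by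
      funext s
      rw [norm_mul, Complex.norm_exp]
      simp [mul_comm]
    rw [this]
    rw [show (0:ℝ) = ‖w⁻¹‖ * 0 by ring]
    apply Filter.Tendsto.const_mul
    apply Real.tendsto_exp_atBot.comp
    exact Filter.Tendsto.const_mul_atTop_of_neg hw Filter.tendsto_id
  have hcont : ContinuousWithinAt (fun s : ℝ => w⁻¹ * Complex.exp (w * s)) (Ici 0) 0 := by
    apply Continuous.continuousWithinAt
    exact continuous_const.mul (Complex.continuous_exp.comp (continuous_const.mul
      Complex.continuous_ofReal))
  have := MeasureTheory.integral_Ioi_of_hasDerivAt_of_tendsto hcont hderiv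
    (cexp_integrableOn hw) htend
  rw [this]
  simp
end CexpInt

section Qval
variable {μ₂ lam s : ℝ}

lemma qval_pointwise (hlam : 0 < lam) (hs : 0 < s) :
    ∀ t ∈ Ioi (0:ℝ),
      Real.exp (-(lam * t)) * ((Real.exp (-(s - μ₂ * t) ^ 2 / (2 * t))
          + Real.exp (-(s + μ₂ * t) ^ 2 / (2 * t))) / Real.sqrt (2 * π * t))
        = (Real.exp (μ₂ * s) / Real.sqrt (2 * π))
            * (Real.exp (-((lam + μ₂ ^ 2 / 2) * t + s ^ 2 / 2 / t)) / Real.sqrt t)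
          + (Real.exp (-(μ₂ * s)) / Real.sqrt (2 * π))
            * (Real.exp (-((lam + μ₂ ^ 2 / 2) * t + s ^ 2 / 2 / t)) / Real.sqrt t) := by
  intro t ht
  simp only [mem_Ioi] at ht
  set a := lam + μ₂ ^ 2 / 2
  set b := s ^ 2 / 2
  have hsq : Real.sqrt (2 * π * t) = Real.sqrt (2 * π) * Real.sqrt t := Real.sqrt_mul (by positivity) t
  have e1 : -(lam * t) + -(s - μ₂ * t) ^ 2 / (2 * t) = μ₂ * s + -(a * t + b / t) := by
    field_simp
    ring
  have e2 : -(lam * t) + -(s + μ₂ * t) ^ 2 / (2 * t) = -(μ₂ * s) + -(a * t + b / t) := by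
    field_simp
    ring
  have hA : Real.exp (-(lam * t)) * Real.exp (-(s - μ₂ * t) ^ 2 / (2 * t))
      = Real.exp (μ₂ * s) * Real.exp (-(a * t + b / t)) := by
    rw [← Real.exp_add, ← Real.exp_add, e1]
  have hB : Real.exp (-(lam * t)) * Real.exp (-(s + μ₂ * t) ^ 2 / (2 * t))
      = Real.exp (-(μ₂ * s)) * Real.exp (-(a * t + b / t)) := by
    rw [← Real.exp_add, ← Real.exp_add, e2]
  rw [hsq]
  calc Real.exp (-(lam * t)) * ((Real.exp (-(s - μ₂ * t) ^ 2 / (2 * t))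
          + Real.exp (-(s + μ₂ * t) ^ 2 / (2 * t))) / (Real.sqrt (2 * π) * Real.sqrt t))
      = (Real.exp (-(lam * t)) * Real.exp (-(s - μ₂ * t) ^ 2 / (2 * t)))
          / (Real.sqrt (2 * π) * Real.sqrt t)
        + (Real.exp (-(lam * t)) * Real.exp (-(s + μ₂ * t) ^ 2 / (2 * t)))
          / (Real.sqrt (2 * π) * Real.sqrt t) := by ring
    _ = (Real.exp (μ₂ * s) * Real.exp (-(a * t + b / t))) / (Real.sqrt (2 * π) * Real.sqrt t)
        + (Real.exp (-(μ₂ * s)) * Real.exp (-(a * t + b / t)))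
          / (Real.sqrt (2 * π) * Real.sqrt t) := by rw [hA, hB]
    _ = _ := by ring

lemma qval_integrableOn (hlam : 0 < lam) (hs : 0 < s) :
    IntegrableOn (fun t : ℝ => Real.exp (-(lam * t)) * ((Real.exp (-(s - μ₂ * t) ^ 2 / (2 * t))
        + Real.exp (-(s + μ₂ * t) ^ 2 / (2 * t))) / Real.sqrt (2 * π * t))) (Ioi 0) := by
  have ha : (0:ℝ) < lam + μ₂ ^ 2 / 2 := by positivity
  have hb : (0:ℝ) < s ^ 2 / 2 := by positivity
  have h1 := ((laplace_subst ha hb).2.const_mul (Real.exp (μ₂ * s) / Real.sqrt (2 * π)))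
  have h2 := ((laplace_subst ha hb).2.const_mul (Real.exp (-(μ₂ * s)) / Real.sqrt (2 * π)))
  exact MeasureTheory.IntegrableOn.congr_fun (h1.add h2)
    (fun t ht => ((qval_pointwise (μ₂ := μ₂) hlam hs t ht).symm)) measurableSet_Ioi

lemma qval (hlam : 0 < lam) (hs : 0 < s) :
    (∫ t in Ioi (0:ℝ), Real.exp (-(lam * t)) * ((Real.exp (-(s - μ₂ * t) ^ 2 / (2 * t))
        + Real.exp (-(s + μ₂ * t) ^ 2 / (2 * t))) / Real.sqrt (2 * π * t)))
      = (Real.exp (μ₂ * s) + Real.exp (-(μ₂ * s)))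
          * Real.exp (-(Real.sqrt (2 * lam + μ₂ ^ 2) * s)) / Real.sqrt (2 * lam + μ₂ ^ 2) := by
  have ha : (0:ℝ) < lam + μ₂ ^ 2 / 2 := by positivity
  have hb : (0:ℝ) < s ^ 2 / 2 := by positivity
  set a := lam + μ₂ ^ 2 / 2 with ha'
  set b := s ^ 2 / 2 with hb'
  set β := Real.sqrt (2 * lam + μ₂ ^ 2) with hβ'
  have hβpos : 0 < β := Real.sqrt_pos.mpr (by positivity)
  have hβ2 : β ^ 2 = 2 * lam + μ₂ ^ 2 := Real.sq_sqrt (by positivity)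
  have hab : Real.sqrt (a * b) = β * s / 2 := by
    have h1 : a * b = (β * s / 2) ^ 2 := by
      have : (β * s / 2) ^ 2 = β ^ 2 * s ^ 2 / 4 := by ring
      rw [this, hβ2, ha', hb']
      ring
    rw [h1, Real.sqrt_sq (by positivity)]
  have hβ2a : β = Real.sqrt 2 * Real.sqrt a := by
    rw [← Real.sqrt_mul (by norm_num : (0:ℝ) ≤ 2), hβ']
    congr 1
    rw [ha']
    ring
  rw [setIntegral_congr_fun measurableSet_Ioi (qval_pointwise hlam hs)]
  rw [MeasureTheory.integral_add (((laplace_subst ha hb).2.const_mul _))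
    (((laplace_subst ha hb).2.const_mul _)), MeasureTheory.integral_const_mul,
    MeasureTheory.integral_const_mul, (laplace_subst ha hb).1]
  rw [Real.sqrt_div Real.pi_nonneg, hab, Real.sqrt_mul (by norm_num : (0:ℝ) ≤ 2) π]
  have hd : 2 * Real.sqrt (a * b) = β * s := by rw [hab]; ring
  have hπ : (0:ℝ) < Real.sqrt π := Real.sqrt_pos.mpr Real.pi_pos
  have h2 : (0:ℝ) < Real.sqrt 2 := by positivity
  have hsa : (0:ℝ) < Real.sqrt a := Real.sqrt_pos.mpr ha
  rw [show -(2 * (β * s / 2)) = -(β * s) by ring, hβ2a]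
  field_simp
end Qval

section K1
variable {μ₁ s γ : ℝ}

lemma k1_integrable (μ₁ : ℝ) (hs : 0 < s) :
    Integrable (fun x : ℝ => Real.exp (-(x - μ₁ * s) ^ 2 / (2 * s)) / Real.sqrt (2 * π * s)) := by
  have h0 : (fun x : ℝ => Real.exp (-(x - μ₁ * s) ^ 2 / (2 * s)) / Real.sqrt (2 * π * s))
      = (fun y : ℝ => Real.exp (-(1/(2*s)) * y ^ 2) / Real.sqrt (2 * π * s))
        ∘ (fun x : ℝ => x - μ₁ * s) := by
    funext x
    simp only [Function.comp_apply]
    congr 2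
    field_simp
  rw [h0]
  exact ((integrable_exp_neg_mul_sq (show (0:ℝ) < 1/(2*s) by positivity)).div_const
    (Real.sqrt (2 * π * s))).comp_sub_right (μ₁ * s)

lemma k1_integral (μ₁ : ℝ) (hs : 0 < s) :
    (∫ x : ℝ, Real.exp (-(x - μ₁ * s) ^ 2 / (2 * s)) / Real.sqrt (2 * π * s)) = 1 := by
  rw [integral_div]
  have h1 : (fun x : ℝ => Real.exp (-(x - μ₁ * s) ^ 2 / (2 * s)))
      = fun x : ℝ => Real.exp (-(1/(2*s)) * (x - μ₁ * s) ^ 2) := by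
    funext x
    congr 1
    field_simp
  rw [h1]
  rw [show (fun x : ℝ => Real.exp (-(1/(2*s)) * (x - μ₁ * s) ^ 2))
    = fun x : ℝ => (fun y : ℝ => Real.exp (-(1/(2*s)) * y ^ 2)) (x - μ₁ * s) from rfl]
  rw [integral_sub_right_eq_self (fun y : ℝ => Real.exp (-(1/(2*s)) * y ^ 2)) (μ₁ * s)]
  rw [integral_gaussian]
  rw [show π / (1/(2*s)) = 2 * π * s by field_simp]
  exact div_self (Real.sqrt_ne_zero'.mpr (by positivity))

open Complex in
lemma k1_fourier (μ₁ : ℝ) (hs : 0 < s) :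
    (∫ x : ℝ, Complex.exp (Complex.I * (γ:ℂ) * (x:ℂ))
        * ((Real.exp (-(x - μ₁ * s) ^ 2 / (2 * s)) / Real.sqrt (2 * π * s) : ℝ) : ℂ))
      = Complex.exp ((Complex.I * (γ:ℂ) * (μ₁:ℂ) - (γ:ℂ) ^ 2 / 2) * (s:ℂ)) := by
  have hs0 : (s:ℂ) ≠ 0 := by exact_mod_cast hs.ne'
  set b : ℂ := ((-(1/(2*s)) : ℝ) : ℂ) with hb'
  have hb : b.re < 0 := by
    rw [hb', Complex.ofReal_re]
    have : (0:ℝ) < 1/(2*s) := by positivity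
    linarith
  have hbne : b ≠ 0 := fun h => by rw [h] at hb; simp at hb
  set c : ℂ := Complex.I * (γ:ℂ) + (μ₁:ℂ) with hc'
  set d : ℂ := -((μ₁:ℂ) ^ 2 * (s:ℂ) / 2) with hd'
  have key : ∀ x : ℝ, Complex.exp (Complex.I * (γ:ℂ) * (x:ℂ))
      * ((Real.exp (-(x - μ₁ * s) ^ 2 / (2 * s)) / Real.sqrt (2 * π * s) : ℝ) : ℂ)
      = Complex.exp (b * (x:ℂ) ^ 2 + c * (x:ℂ) + d) / ((Real.sqrt (2 * π * s) : ℝ) : ℂ) := by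
    intro x
    rw [Complex.ofReal_div, Complex.ofReal_exp, ← mul_div_assoc]
    congr 1
    rw [← Complex.exp_add]
    congr 1
    rw [hb', hc', hd']
    push_cast
    field_simp
    ring
  rw [integral_congr_ae (Filter.Eventually.of_forall key)]
  rw [MeasureTheory.integral_div, integral_cexp_quadratic hb c d]
  have hpre : ((π:ℂ) / -b) ^ (1/2 : ℂ) = ((Real.sqrt (2 * π * s) : ℝ) : ℂ) := by
    have h1 : (π:ℂ) / -b = ((2 * π * s : ℝ) : ℂ) := by
      rw [hb']
      push_cast
      field_simp
    rw [h1]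
    rw [show (1/2 : ℂ) = ((1/2 : ℝ) : ℂ) by norm_num]
    rw [← Complex.ofReal_cpow (by positivity)]
    rw [← Real.sqrt_eq_rpow]
  rw [hpre]
  have hN : ((Real.sqrt (2 * π * s) : ℝ) : ℂ) ≠ 0 := by
    exact_mod_cast (Real.sqrt_ne_zero'.mpr (by positivity : (0:ℝ) < 2 * π * s))
  rw [mul_comm, mul_div_assoc, div_self hN, mul_one]
  congr 1
  rw [hb', hc', hd']
  push_cast
  field_simp
  ring_nf
  rw [Complex.I_sq]
  ring

lemma k1_mul_cexp_integrable (μ₁ : ℝ) (hs : 0 < s) :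
    Integrable (fun x : ℝ => Complex.exp (Complex.I * (γ:ℂ) * (x:ℂ))
      * ((Real.exp (-(x - μ₁ * s) ^ 2 / (2 * s)) / Real.sqrt (2 * π * s) : ℝ) : ℂ)) := by
  refine Integrable.bdd_mul (k1_integrable μ₁ hs).ofReal (c := 1) ?_ (Filter.Eventually.of_forall fun x => ?_)
  · apply Measurable.aestronglyMeasurable
    exact Complex.measurable_exp.comp ((measurable_const.mul Complex.measurable_ofReal))
  · rw [Complex.norm_exp]
    simp [Complex.mul_re]
end K1

section SInt

lemma exp_div_sqrt_integrableOn {ε : ℝ} (hε : 0 < ε) :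
    IntegrableOn (fun s : ℝ => Real.exp (-(ε * s)) / Real.sqrt s) (Ioi 0) := by
  have h0 := Real.GammaIntegral_convergent (by norm_num : (0:ℝ) < 1/2)
  have h1 : IntegrableOn (fun s : ℝ => Real.exp (-(ε * s)) * (ε * s) ^ ((1:ℝ)/2 - 1))
      (Ioi 0) := by
    have h2 := (integrableOn_Ioi_comp_mul_left_iff
      (fun x : ℝ => Real.exp (-x) * x ^ ((1:ℝ)/2 - 1)) 0 hε).mpr (by simpa using h0)
    simpa [mul_zero] using h2
  apply MeasureTheory.IntegrableOn.congr_fun (h1.const_mul (Real.sqrt ε)) ?_ measurableSet_Ioi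
  intro s hs
  simp only [mem_Ioi] at hs
  dsimp only
  have hrp : (ε * s) ^ ((1:ℝ)/2 - 1) = (Real.sqrt (ε * s))⁻¹ := by
    rw [show ((1:ℝ)/2 - 1) = -(1/2) by norm_num, Real.rpow_neg (by positivity),
      ← Real.sqrt_eq_rpow]
  rw [hrp, Real.sqrt_mul hε.le]
  have h3 : Real.sqrt ε ≠ 0 := by positivity
  have h4 : Real.sqrt s ≠ 0 := by positivity
  field_simp

open Complex in
lemma final_s_integral (μ₁ μ₂ lam γ : ℝ) (hlam : 0 < lam) :
    (∫ s in Ioi (0:ℝ), Complex.exp ((Complex.I * (γ:ℂ) * (μ₁:ℂ) - (γ:ℂ) ^ 2 / 2) * (s:ℂ))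
        * (((Real.exp (μ₂ * s) + Real.exp (-(μ₂ * s)))
            * Real.exp (-(Real.sqrt (2 * lam + μ₂ ^ 2) * s)) / Real.sqrt (2 * lam + μ₂ ^ 2) : ℝ) : ℂ))
      = (1 / (Real.sqrt (2 * lam + μ₂ ^ 2) : ℂ))
          * (1 / ((γ : ℂ) ^ 2 / 2 - Complex.I * (γ : ℂ) * (μ₁ : ℂ)
                + (Real.sqrt (2 * lam + μ₂ ^ 2) : ℂ) - (μ₂ : ℂ))
            + 1 / ((γ : ℂ) ^ 2 / 2 - Complex.I * (γ : ℂ) * (μ₁ : ℂ)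
                + (Real.sqrt (2 * lam + μ₂ ^ 2) : ℂ) + (μ₂ : ℂ))) := by
  set β := Real.sqrt (2 * lam + μ₂ ^ 2) with hβ'
  have hβ2 : β ^ 2 = 2 * lam + μ₂ ^ 2 := Real.sq_sqrt (by positivity)
  have hβpos : 0 < β := Real.sqrt_pos.mpr (by positivity)
  have hβgt : |μ₂| < β := by
    nlinarith [abs_nonneg μ₂, _root_.sq_abs μ₂]
  have hμβ1 : μ₂ < β := lt_of_le_of_lt (le_abs_self μ₂) hβgt
  have hμβ2 : -β < μ₂ := by
    have := neg_abs_le μ₂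
    linarith
  set c : ℂ := Complex.I * (γ:ℂ) * (μ₁:ℂ) - (γ:ℂ) ^ 2 / 2 with hc'
  set w₁ : ℂ := c + (μ₂:ℂ) - (β:ℂ) with hw₁'
  set w₂ : ℂ := c - (μ₂:ℂ) - (β:ℂ) with hw₂'
  have hcre : c.re = -(γ ^ 2 / 2) := by
    rw [hc']
    rw [show ((γ:ℂ) ^ 2) = ((γ ^ 2 : ℝ) : ℂ) by push_cast; ring]
    simp only [Complex.sub_re, Complex.div_re, Complex.mul_re, Complex.I_re, Complex.I_im,
      Complex.ofReal_re, Complex.ofReal_im, Complex.mul_im]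
    norm_num [Complex.normSq_apply]
    ring
  have hw₁re : w₁.re < 0 := by
    rw [hw₁']
    simp only [Complex.sub_re, Complex.add_re, Complex.ofReal_re, hcre]
    nlinarith [sq_nonneg γ]
  have hw₂re : w₂.re < 0 := by
    rw [hw₂']
    simp only [Complex.sub_re, Complex.ofReal_re, hcre]
    nlinarith [sq_nonneg γ, abs_nonneg μ₂, neg_abs_le μ₂]
  have hkey : ∀ s ∈ Ioi (0:ℝ), Complex.exp (c * (s:ℂ))
      * (((Real.exp (μ₂ * s) + Real.exp (-(μ₂ * s))) * Real.exp (-(β * s)) / β : ℝ) : ℂ)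
      = (1/(β:ℂ)) * Complex.exp (w₁ * (s:ℂ)) + (1/(β:ℂ)) * Complex.exp (w₂ * (s:ℂ)) := by
    intro s _
    rw [hw₁', hw₂']
    push_cast
    rw [show (c + (μ₂:ℂ) - (β:ℂ)) * (s:ℂ) = c * s + ((μ₂:ℂ) * s + -((β:ℂ) * s)) by ring,
      show (c - (μ₂:ℂ) - (β:ℂ)) * (s:ℂ) = c * s + (-((μ₂:ℂ) * s) + -((β:ℂ) * s)) by ring,
      Complex.exp_add, Complex.exp_add, Complex.exp_add, Complex.exp_add]
    have hβne : (β:ℂ) ≠ 0 := by exact_mod_cast hβpos.ne'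
    field_simp
  rw [setIntegral_congr_fun measurableSet_Ioi hkey]
  rw [MeasureTheory.integral_add ((cexp_integrableOn hw₁re).const_mul _)
    ((cexp_integrableOn hw₂re).const_mul _), MeasureTheory.integral_const_mul,
    MeasureTheory.integral_const_mul, cexp_integral_Ioi hw₁re, cexp_integral_Ioi hw₂re]
  have h1 : -w₁⁻¹ = 1 / ((γ : ℂ) ^ 2 / 2 - Complex.I * (γ:ℂ) * (μ₁:ℂ) + (β:ℂ) - (μ₂:ℂ)) := by
    rw [hw₁', hc']
    rw [show ((γ : ℂ) ^ 2 / 2 - Complex.I * (γ:ℂ) * (μ₁:ℂ) + (β:ℂ) - (μ₂:ℂ))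
      = -(Complex.I * (γ:ℂ) * (μ₁:ℂ) - (γ:ℂ) ^ 2 / 2 + (μ₂:ℂ) - (β:ℂ)) by ring]
    rw [one_div, inv_neg]
  have h2 : -w₂⁻¹ = 1 / ((γ : ℂ) ^ 2 / 2 - Complex.I * (γ:ℂ) * (μ₁:ℂ) + (β:ℂ) + (μ₂:ℂ)) := by
    rw [hw₂', hc']
    rw [show ((γ : ℂ) ^ 2 / 2 - Complex.I * (γ:ℂ) * (μ₁:ℂ) + (β:ℂ) + (μ₂:ℂ))
      = -(Complex.I * (γ:ℂ) * (μ₁:ℂ) - (γ:ℂ) ^ 2 / 2 - (μ₂:ℂ) - (β:ℂ)) by ring]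
    rw [one_div, inv_neg]
  rw [h1, h2]
  ring
end SInt

section Fub
variable {μ₁ μ₂ lam γ : ℝ}

lemma qclosed_bound (hlam : 0 < lam) :
    ∀ s ∈ Ioi (0:ℝ), (Real.exp (μ₂ * s) + Real.exp (-(μ₂ * s)))
        * Real.exp (-(Real.sqrt (2 * lam + μ₂ ^ 2) * s)) / Real.sqrt (2 * lam + μ₂ ^ 2)
      ≤ (2 / Real.sqrt (2 * lam + μ₂ ^ 2))
          * Real.exp (-((Real.sqrt (2 * lam + μ₂ ^ 2) - |μ₂|) * s)) := by
  intro s hs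
  simp only [mem_Ioi] at hs
  set β := Real.sqrt (2 * lam + μ₂ ^ 2) with hβ'
  have hβpos : 0 < β := Real.sqrt_pos.mpr (by positivity)
  have h1 : Real.exp (μ₂ * s) + Real.exp (-(μ₂ * s)) ≤ 2 * Real.exp (|μ₂| * s) := by
    have ha : Real.exp (μ₂ * s) ≤ Real.exp (|μ₂| * s) :=
      Real.exp_le_exp.mpr (mul_le_mul_of_nonneg_right (le_abs_self μ₂) hs.le)
    have hb : Real.exp (-(μ₂ * s)) ≤ Real.exp (|μ₂| * s) := by
      apply Real.exp_le_exp.mpr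
      rw [show -(μ₂ * s) = (-μ₂) * s by ring]
      exact mul_le_mul_of_nonneg_right (neg_le_abs μ₂) hs.le
    linarith
  have h2 : (2 / β) * Real.exp (-((β - |μ₂|) * s))
      = 2 * Real.exp (|μ₂| * s) * Real.exp (-(β * s)) / β := by
    rw [show -((β - |μ₂|) * s) = |μ₂| * s + -(β * s) by ring, Real.exp_add]
    ring
  rw [h2]
  gcongr

lemma qclosed_integrableOn (hlam : 0 < lam) :
    IntegrableOn (fun s : ℝ => (Real.exp (μ₂ * s) + Real.exp (-(μ₂ * s)))
        * Real.exp (-(Real.sqrt (2 * lam + μ₂ ^ 2) * s)) / Real.sqrt (2 * lam + μ₂ ^ 2))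
      (Ioi 0) := by
  set β := Real.sqrt (2 * lam + μ₂ ^ 2) with hβ'
  have hβpos : 0 < β := Real.sqrt_pos.mpr (by positivity)
  have hβ2 : β ^ 2 = 2 * lam + μ₂ ^ 2 := Real.sq_sqrt (by positivity)
  have hε : 0 < β - |μ₂| := by nlinarith [abs_nonneg μ₂, _root_.sq_abs μ₂]
  have hintd : IntegrableOn (fun s : ℝ => (2 / β) * Real.exp (-((β - |μ₂|) * s))) (Ioi 0) := by
    apply Integrable.const_mul
    have := exp_neg_integrableOn_Ioi 0 hε
    refine this.congr (Filter.Eventually.of_forall fun s => by simp only [neg_mul])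
  refine Integrable.mono' hintd (Measurable.aestronglyMeasurable (by fun_prop)) ?_
  rw [ae_restrict_iff' measurableSet_Ioi]
  filter_upwards with s hs
  rw [Real.norm_eq_abs, abs_of_nonneg (by positivity)]
  exact qclosed_bound hlam s hs

lemma k1q_integrableOn (μ₁ : ℝ) (x : ℝ) (hlam : 0 < lam) :
    IntegrableOn (fun s : ℝ => Real.exp (-(x - μ₁ * s) ^ 2 / (2 * s)) / Real.sqrt (2 * π * s)
        * ((Real.exp (μ₂ * s) + Real.exp (-(μ₂ * s)))
            * Real.exp (-(Real.sqrt (2 * lam + μ₂ ^ 2) * s)) / Real.sqrt (2 * lam + μ₂ ^ 2)))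
      (Ioi 0) := by
  set β := Real.sqrt (2 * lam + μ₂ ^ 2) with hβ'
  have hβpos : 0 < β := Real.sqrt_pos.mpr (by positivity)
  have hβ2 : β ^ 2 = 2 * lam + μ₂ ^ 2 := Real.sq_sqrt (by positivity)
  have hε : 0 < β - |μ₂| := by nlinarith [abs_nonneg μ₂, _root_.sq_abs μ₂]
  have hintd : IntegrableOn (fun s : ℝ => (2 / (β * Real.sqrt (2 * π)))
      * (Real.exp (-((β - |μ₂|) * s)) / Real.sqrt s)) (Ioi 0) :=
    (exp_div_sqrt_integrableOn hε).const_mul _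
  refine Integrable.mono' hintd (Measurable.aestronglyMeasurable (by fun_prop)) ?_
  rw [ae_restrict_iff' measurableSet_Ioi]
  filter_upwards with s hs
  have hs' : (0:ℝ) < s := hs
  rw [Real.norm_eq_abs, abs_of_nonneg (by positivity)]
  have hK1 : Real.exp (-(x - μ₁ * s) ^ 2 / (2 * s)) / Real.sqrt (2 * π * s)
      ≤ 1 / (Real.sqrt (2 * π) * Real.sqrt s) := by
    rw [Real.sqrt_mul (by positivity) s]
    gcongr
    · exact Real.exp_le_one_iff.mpr (by
        apply div_nonpos_of_nonpos_of_nonneg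
        · simp only [neg_nonpos]
          positivity
        · positivity)
  have hq := qclosed_bound (μ₂ := μ₂) hlam s hs
  calc Real.exp (-(x - μ₁ * s) ^ 2 / (2 * s)) / Real.sqrt (2 * π * s)
        * ((Real.exp (μ₂ * s) + Real.exp (-(μ₂ * s))) * Real.exp (-(β * s)) / β)
      ≤ (1 / (Real.sqrt (2 * π) * Real.sqrt s))
          * ((2 / β) * Real.exp (-((β - |μ₂|) * s))) := by
        apply mul_le_mul hK1 hq (by positivity) (by positivity)
    _ = (2 / (β * Real.sqrt (2 * π))) * (Real.exp (-((β - |μ₂|) * s)) / Real.sqrt s) := by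
        ring
end Fub

section Fub2
variable {μ₁ μ₂ lam γ : ℝ}

lemma fubini1 (μ₁ : ℝ) (x : ℝ) (hlam : 0 < lam) :
    (∫ t in Ioi (0:ℝ), Real.exp (-(lam * t)) *
        ∫ s in Ioi (0:ℝ),
          Real.exp (-(x - μ₁ * s) ^ 2 / (2 * s)) / Real.sqrt (2 * π * s)
            * ((Real.exp (-(s - μ₂ * t) ^ 2 / (2 * t)) + Real.exp (-(s + μ₂ * t) ^ 2 / (2 * t)))
                / Real.sqrt (2 * π * t)))
      = ∫ s in Ioi (0:ℝ),
          Real.exp (-(x - μ₁ * s) ^ 2 / (2 * s)) / Real.sqrt (2 * π * s)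
            * ((Real.exp (μ₂ * s) + Real.exp (-(μ₂ * s)))
                * Real.exp (-(Real.sqrt (2 * lam + μ₂ ^ 2) * s)) / Real.sqrt (2 * lam + μ₂ ^ 2)) := by
  set F : ℝ → ℝ → ℝ := fun s t => Real.exp (-(lam * t)) *
    (Real.exp (-(x - μ₁ * s) ^ 2 / (2 * s)) / Real.sqrt (2 * π * s)
      * ((Real.exp (-(s - μ₂ * t) ^ 2 / (2 * t)) + Real.exp (-(s + μ₂ * t) ^ 2 / (2 * t)))
          / Real.sqrt (2 * π * t))) with hF'
  have hFmeas : AEStronglyMeasurable (Function.uncurry F)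
      ((volume.restrict (Ioi 0)).prod (volume.restrict (Ioi 0))) :=
    Measurable.aestronglyMeasurable (by rw [hF']; fun_prop)
  have hFnonneg : ∀ s ∈ Ioi (0:ℝ), ∀ t, 0 ≤ F s t := by
    intro s _ t
    rw [hF']
    positivity
  have hsec : ∀ s ∈ Ioi (0:ℝ), (∫ t in Ioi (0:ℝ), F s t)
      = Real.exp (-(x - μ₁ * s) ^ 2 / (2 * s)) / Real.sqrt (2 * π * s)
        * ((Real.exp (μ₂ * s) + Real.exp (-(μ₂ * s)))
            * Real.exp (-(Real.sqrt (2 * lam + μ₂ ^ 2) * s)) / Real.sqrt (2 * lam + μ₂ ^ 2)) := by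
    intro s hs
    simp only [mem_Ioi] at hs
    have h1 : ∀ t : ℝ, F s t = (Real.exp (-(x - μ₁ * s) ^ 2 / (2 * s)) / Real.sqrt (2 * π * s))
        * (Real.exp (-(lam * t)) * ((Real.exp (-(s - μ₂ * t) ^ 2 / (2 * t))
            + Real.exp (-(s + μ₂ * t) ^ 2 / (2 * t))) / Real.sqrt (2 * π * t))) := by
      intro t
      rw [hF']
      ring
    rw [integral_congr_ae (Filter.Eventually.of_forall h1), MeasureTheory.integral_const_mul,
      qval hlam hs]
  have hsecInt : ∀ s ∈ Ioi (0:ℝ), IntegrableOn (fun t => F s t) (Ioi 0) := by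
    intro s hs
    simp only [mem_Ioi] at hs
    refine ((qval_integrableOn (μ₂ := μ₂) hlam hs).const_mul
      (Real.exp (-(x - μ₁ * s) ^ 2 / (2 * s)) / Real.sqrt (2 * π * s))).congr
      (Filter.Eventually.of_forall fun t => by rw [hF']; ring)
  have hint : Integrable (Function.uncurry F)
      ((volume.restrict (Ioi 0)).prod (volume.restrict (Ioi 0))) := by
    rw [MeasureTheory.integrable_prod_iff hFmeas]
    constructor
    · rw [ae_restrict_iff' measurableSet_Ioi]
      filter_upwards with s hs
      exact hsecInt s hs
    · refine (k1q_integrableOn (μ₂ := μ₂) μ₁ x hlam).congr ?_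
      rw [Filter.eventuallyEq_iff_exists_mem]
      refine ⟨Ioi 0, self_mem_ae_restrict measurableSet_Ioi, fun s hs => ?_⟩
      dsimp only
      rw [← hsec s hs]
      refine (setIntegral_congr_fun measurableSet_Ioi fun t _ => ?_).symm
      simp only [Function.uncurry_apply_pair, Real.norm_eq_abs]
      exact abs_of_nonneg (hFnonneg s hs t)
  have hswap := MeasureTheory.integral_integral_swap (f := F) hint
  have hL : (∫ t in Ioi (0:ℝ), Real.exp (-(lam * t)) *
      ∫ s in Ioi (0:ℝ),
        Real.exp (-(x - μ₁ * s) ^ 2 / (2 * s)) / Real.sqrt (2 * π * s)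
          * ((Real.exp (-(s - μ₂ * t) ^ 2 / (2 * t)) + Real.exp (-(s + μ₂ * t) ^ 2 / (2 * t)))
              / Real.sqrt (2 * π * t)))
      = ∫ t in Ioi (0:ℝ), ∫ s in Ioi (0:ℝ), F s t := by
    refine setIntegral_congr_fun measurableSet_Ioi fun t _ => ?_
    rw [← MeasureTheory.integral_const_mul]
  rw [hL, ← hswap]
  exact setIntegral_congr_fun measurableSet_Ioi hsec

open Complex in
lemma fubini2 (μ₁ : ℝ) (hlam : 0 < lam) :
    (∫ x : ℝ, Complex.exp (Complex.I * (γ:ℂ) * (x:ℂ))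
        * ((∫ s in Ioi (0:ℝ),
            Real.exp (-(x - μ₁ * s) ^ 2 / (2 * s)) / Real.sqrt (2 * π * s)
              * ((Real.exp (μ₂ * s) + Real.exp (-(μ₂ * s)))
                  * Real.exp (-(Real.sqrt (2 * lam + μ₂ ^ 2) * s))
                  / Real.sqrt (2 * lam + μ₂ ^ 2)) : ℝ) : ℂ))
      = ∫ s in Ioi (0:ℝ),
          Complex.exp ((Complex.I * (γ:ℂ) * (μ₁:ℂ) - (γ:ℂ) ^ 2 / 2) * (s:ℂ))
            * (((Real.exp (μ₂ * s) + Real.exp (-(μ₂ * s)))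
                * Real.exp (-(Real.sqrt (2 * lam + μ₂ ^ 2) * s))
                / Real.sqrt (2 * lam + μ₂ ^ 2) : ℝ) : ℂ) := by
  set q : ℝ → ℝ := fun s => (Real.exp (μ₂ * s) + Real.exp (-(μ₂ * s)))
    * Real.exp (-(Real.sqrt (2 * lam + μ₂ ^ 2) * s)) / Real.sqrt (2 * lam + μ₂ ^ 2) with hq'
  have hqnonneg : ∀ s : ℝ, 0 ≤ q s := fun s => by rw [hq']; positivity
  set G : ℝ → ℝ → ℂ := fun s x => Complex.exp (Complex.I * (γ:ℂ) * (x:ℂ))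
    * ((Real.exp (-(x - μ₁ * s) ^ 2 / (2 * s)) / Real.sqrt (2 * π * s) * q s : ℝ) : ℂ) with hG'
  have hGmeas : AEStronglyMeasurable (Function.uncurry G)
      ((volume.restrict (Ioi 0)).prod volume) :=
    Measurable.aestronglyMeasurable (by rw [hG', hq']; fun_prop)
  have hsecInt : ∀ s ∈ Ioi (0:ℝ), Integrable (fun x => G s x) := by
    intro s hs
    simp only [mem_Ioi] at hs
    refine ((k1_mul_cexp_integrable (γ := γ) μ₁ hs).mul_const ((q s : ℝ) : ℂ)).congr
      (Filter.Eventually.of_forall fun x => ?_)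
    rw [hG']
    push_cast
    ring
  have hnorm : ∀ s ∈ Ioi (0:ℝ), (∫ x : ℝ, ‖G s x‖) = q s := by
    intro s hs
    simp only [mem_Ioi] at hs
    have h1 : ∀ x : ℝ, ‖G s x‖ = Real.exp (-(x - μ₁ * s) ^ 2 / (2 * s)) / Real.sqrt (2 * π * s)
        * q s := by
      intro x
      rw [hG', norm_mul, Complex.norm_exp]
      have hre : (Complex.I * (γ:ℂ) * (x:ℂ)).re = 0 := by
        simp [Complex.mul_re, Complex.I_re, Complex.I_im]
      rw [hre, Real.exp_zero, one_mul, Complex.norm_real, Real.norm_eq_abs]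
      exact abs_of_nonneg (by positivity)
    rw [integral_congr_ae (Filter.Eventually.of_forall h1), MeasureTheory.integral_mul_const,
      k1_integral μ₁ hs, one_mul]
  have hint : Integrable (Function.uncurry G) ((volume.restrict (Ioi 0)).prod volume) := by
    rw [MeasureTheory.integrable_prod_iff hGmeas]
    constructor
    · rw [ae_restrict_iff' measurableSet_Ioi]
      filter_upwards with s hs
      exact hsecInt s hs
    · refine (qclosed_integrableOn (μ₂ := μ₂) hlam).congr ?_
      rw [Filter.eventuallyEq_iff_exists_mem]
      exact ⟨Ioi 0, self_mem_ae_restrict measurableSet_Ioi, fun s hs => (hnorm s hs).symm⟩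
  have hswap := MeasureTheory.integral_integral_swap (f := G) hint
  have hL : (∫ x : ℝ, Complex.exp (Complex.I * (γ:ℂ) * (x:ℂ))
      * ((∫ s in Ioi (0:ℝ),
          Real.exp (-(x - μ₁ * s) ^ 2 / (2 * s)) / Real.sqrt (2 * π * s) * q s : ℝ) : ℂ))
      = ∫ x : ℝ, ∫ s in Ioi (0:ℝ), G s x := by
    refine integral_congr_ae (Filter.Eventually.of_forall fun x => ?_)
    rw [hG']
    dsimp only
    have hcast : ((∫ s in Ioi (0:ℝ),
        Real.exp (-(x - μ₁ * s) ^ 2 / (2 * s)) / Real.sqrt (2 * π * s) * q s : ℝ) : ℂ)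
        = ∫ s in Ioi (0:ℝ), ((Real.exp (-(x - μ₁ * s) ^ 2 / (2 * s)) / Real.sqrt (2 * π * s)
            * q s : ℝ) : ℂ) := (integral_ofReal (𝕜 := ℂ)).symm
    rw [hcast, ← MeasureTheory.integral_const_mul]
  rw [hL, ← hswap]
  refine setIntegral_congr_fun measurableSet_Ioi fun s hs => ?_
  simp only [mem_Ioi] at hs
  have h2 : ∀ x : ℝ, G s x = ((q s : ℝ) : ℂ) * (Complex.exp (Complex.I * (γ:ℂ) * (x:ℂ))
      * ((Real.exp (-(x - μ₁ * s) ^ 2 / (2 * s)) / Real.sqrt (2 * π * s) : ℝ) : ℂ)) := by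
    intro x
    rw [hG']
    push_cast
    ring
  rw [integral_congr_ae (Filter.Eventually.of_forall h2), MeasureTheory.integral_const_mul,
    k1_fourier μ₁ hs]
  ring
end Fub2

end aux

/-- The density `p(x,t)` of the iterated Brownian motion `B₁^{μ₁}(|B₂^{μ₂}(t)|)`. -/
noncomputable def iterBMDensity (μ₁ μ₂ x t : ℝ) : ℝ :=
  ∫ s in Set.Ioi (0:ℝ),
    Real.exp (-(x - μ₁ * s) ^ 2 / (2 * s)) / Real.sqrt (2 * π * s)
      * ((Real.exp (-(s - μ₂ * t) ^ 2 / (2 * t)) + Real.exp (-(s + μ₂ * t) ^ 2 / (2 * t)))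
          / Real.sqrt (2 * π * t))

/-- The Fourier–Laplace transform of the density of the iterated
Brownian motion `B₁^{μ₁}(|B₂^{μ₂}(t)|)`: for `λ > 0` and `γ ∈ ℝ`,
`∫ e^{iγx} ∫_0^∞ e^{-λt} p(x,t) dt dx
  = (1/√(2λ+μ₂²)) [1/(γ²/2 - iγμ₁ + √(2λ+μ₂²) - μ₂) + 1/(γ²/2 - iγμ₁ + √(2λ+μ₂²) + μ₂)]`. -/
theorem iterBM_fourier_laplace (μ₁ μ₂ lam γ : ℝ) (hlam : 0 < lam) :
    (∫ x : ℝ, Complex.exp (Complex.I * (γ : ℂ) * (x : ℂ))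
        * ∫ t in Set.Ioi (0:ℝ), Complex.exp (-(lam : ℂ) * (t : ℂ))
            * (iterBMDensity μ₁ μ₂ x t : ℂ))
      = (1 / (Real.sqrt (2 * lam + μ₂ ^ 2) : ℂ))
          * (1 / ((γ : ℂ) ^ 2 / 2 - Complex.I * (γ : ℂ) * (μ₁ : ℂ)
                + (Real.sqrt (2 * lam + μ₂ ^ 2) : ℂ) - (μ₂ : ℂ))
            + 1 / ((γ : ℂ) ^ 2 / 2 - Complex.I * (γ : ℂ) * (μ₁ : ℂ)
                + (Real.sqrt (2 * lam + μ₂ ^ 2) : ℂ) + (μ₂ : ℂ))) := by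
  have h1 : ∀ x : ℝ, (∫ t in Set.Ioi (0:ℝ), Complex.exp (-(lam : ℂ) * (t : ℂ))
      * (iterBMDensity μ₁ μ₂ x t : ℂ))
      = ((∫ t in Set.Ioi (0:ℝ), Real.exp (-(lam * t)) * iterBMDensity μ₁ μ₂ x t : ℝ) : ℂ) := by
    intro x
    have hpt : ∀ t ∈ Set.Ioi (0:ℝ), Complex.exp (-(lam : ℂ) * (t : ℂ))
        * (iterBMDensity μ₁ μ₂ x t : ℂ)
        = ((Real.exp (-(lam * t)) * iterBMDensity μ₁ μ₂ x t : ℝ) : ℂ) := by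
      intro t _
      rw [show (-(lam:ℂ) * (t:ℂ)) = ((-(lam * t) : ℝ) : ℂ) by push_cast; ring,
        ← Complex.ofReal_exp, ← Complex.ofReal_mul]
    rw [setIntegral_congr_fun measurableSet_Ioi hpt]
    exact integral_ofReal (𝕜 := ℂ)
  have h2 : ∀ x : ℝ, (∫ t in Set.Ioi (0:ℝ), Real.exp (-(lam * t)) * iterBMDensity μ₁ μ₂ x t)
      = ∫ s in Set.Ioi (0:ℝ),
          Real.exp (-(x - μ₁ * s) ^ 2 / (2 * s)) / Real.sqrt (2 * π * s)
            * ((Real.exp (μ₂ * s) + Real.exp (-(μ₂ * s)))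
                * Real.exp (-(Real.sqrt (2 * lam + μ₂ ^ 2) * s))
                / Real.sqrt (2 * lam + μ₂ ^ 2)) := by
    intro x
    simp only [iterBMDensity]
    exact fubini1 (μ₂ := μ₂) μ₁ x hlam
  have hx : ∀ x : ℝ, Complex.exp (Complex.I * (γ : ℂ) * (x : ℂ))
      * (∫ t in Set.Ioi (0:ℝ), Complex.exp (-(lam : ℂ) * (t : ℂ))
          * (iterBMDensity μ₁ μ₂ x t : ℂ))
      = Complex.exp (Complex.I * (γ : ℂ) * (x : ℂ))
        * ((∫ s in Set.Ioi (0:ℝ),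
            Real.exp (-(x - μ₁ * s) ^ 2 / (2 * s)) / Real.sqrt (2 * π * s)
              * ((Real.exp (μ₂ * s) + Real.exp (-(μ₂ * s)))
                  * Real.exp (-(Real.sqrt (2 * lam + μ₂ ^ 2) * s))
                  / Real.sqrt (2 * lam + μ₂ ^ 2)) : ℝ) : ℂ) := by
    intro x
    rw [h1 x, h2 x]
  rw [integral_congr_ae (Filter.Eventually.of_forall hx)]
  rw [fubini2 (μ₂ := μ₂) (γ := γ) μ₁ hlam]
  exact final_s_integral μ₁ μ₂ lam γ hlam
end
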